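/- In the setting of the logarithmic-spiral bending map T x = (c(x)x, s(x)x) from Y into X = Y ⊕_Z Y with τ(t) = (ε/c_Z) ln(t/r) on [r,R], let U(x) = (c(x), s(x)) ∈ Z. Then for all x, y ∈ Y with ‖y‖_Y ≤ ‖x‖_Y (and y ≠ 0), ‖U(x) − U(y)‖_Z ≤ ε(‖x‖_Y − ‖y‖_Y)/‖y‖_Y, and consequently ‖y‖_Y · ‖U(x) − U(y)‖_Z ≤ ε‖x − y‖_Y. -/

import Mathlib

/-!
The angular part factors as `U x = u (τ (clamp ‖x‖))` with `clamp t = min R (max r t)`, where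
`u τ = (cos τ, sin τ) / ‖(cos τ, sin τ)‖_Z` is `c_Z`-Lipschitz on `[0, π/2]`. Hence `‖U x - U y‖_Z`
is at most `c_Z (τ b - τ a) = ε (log b - log a)` for the clamped norms `a ≤ b`. Clamping to `[r, R]`
can only shrink log-distances, and `log (t₂ / t₁) ≤ (t₂ - t₁) / t₁`. The second estimate then
follows from `‖x‖ - ‖y‖ ≤ ‖x - y‖`. That `c_Z` is finite comes from `u` being `8`-Lipschitz:
normalising by a seminorm that is at least `1/2` on the circle at most quadruples distances there.
-/

open Real

/-- The curve `u` of the paper. -/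
noncomputable def unitArc (N : ℝ × ℝ → ℝ) (τ : ℝ) : ℝ × ℝ :=
  (cos τ / N (cos τ, sin τ), sin τ / N (cos τ, sin τ))

theorem unitArc_eq_inv_smul (N : ℝ × ℝ → ℝ) (τ : ℝ) :
    unitArc N τ = (N (cos τ, sin τ))⁻¹ • (cos τ, sin τ) := by
  simp [unitArc, div_eq_inv_mul]

theorem unitArc_zero {N : ℝ × ℝ → ℝ} (h10 : N (1, 0) = 1) : unitArc N 0 = (1, 0) := by
  simp [unitArc, h10]

theorem unitArc_pi_div_two {N : ℝ × ℝ → ℝ} (h01 : N (0, 1) = 1) :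
    unitArc N (π / 2) = (0, 1) := by
  simp [unitArc, h01]

namespace Seminorm

section

variable {E : Type*} [AddCommGroup E] [Module ℝ E] (p : Seminorm ℝ E)

theorem map_inv_smul_sub_inv_smul_le {x y : E} (hx : 0 < p x) (hy : 0 < p y) :
    p ((p x)⁻¹ • x - (p y)⁻¹ • y) ≤ 2 * p (x - y) / p x := by
  have hsplit : (p x)⁻¹ • x - (p y)⁻¹ • y = (p x)⁻¹ • (x - y) + ((p x)⁻¹ - (p y)⁻¹) • y := by
    rw [smul_sub, sub_smul]; abel
  have hscale : |(p x)⁻¹ - (p y)⁻¹| * p y = |p y - p x| / p x := by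
    rw [inv_sub_inv hx.ne' hy.ne', abs_div, abs_of_pos (mul_pos hx hy)]
    field_simp
  calc p ((p x)⁻¹ • x - (p y)⁻¹ • y)
      ≤ (p x)⁻¹ * p (x - y) + |(p x)⁻¹ - (p y)⁻¹| * p y := by
        rw [hsplit]
        refine (map_add_le_add p _ _).trans_eq ?_
        simp only [map_smul_eq_mul, Real.norm_eq_abs, abs_inv, abs_of_pos hx]
    _ ≤ 2 * p (x - y) / p x := by
        rw [hscale, map_sub_rev p x y, inv_mul_eq_div, ← add_div, two_mul]
        gcongr
        exact abs_sub_map_le_sub p y x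

end

section Plane

variable (p : Seminorm ℝ (ℝ × ℝ))

theorem apply_mk_zero (h10 : p (1, 0) = 1) (a : ℝ) : p (a, 0) = |a| := by
  simpa [h10] using map_smul_eq_mul p a (1, 0)

theorem apply_zero_mk (h01 : p (0, 1) = 1) (b : ℝ) : p (0, b) = |b| := by
  simpa [h01] using map_smul_eq_mul p b (0, 1)

theorem abs_fst_le (h10 : p (1, 0) = 1) (hsymm : ∀ a b, p (a, -b) = p (a, b)) (a b : ℝ) :
    |a| ≤ p (a, b) := by
  have h := map_add_le_add p (a, b) (a, -b)
  rw [hsymm, Prod.mk_add_mk, add_neg_cancel, ← two_mul,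
    show ((2 * a, 0) : ℝ × ℝ) = (2 : ℝ) • (a, 0) by simp, map_smul_eq_mul,
    apply_mk_zero p h10] at h
  norm_num at h
  linarith

theorem abs_snd_le (h01 : p (0, 1) = 1) (hsymm : ∀ a b, p (-a, b) = p (a, b)) (a b : ℝ) :
    |b| ≤ p (a, b) := by
  have h := map_add_le_add p (a, b) (-a, b)
  rw [hsymm, Prod.mk_add_mk, add_neg_cancel, ← two_mul,
    show ((0, 2 * b) : ℝ × ℝ) = (2 : ℝ) • (0, b) by simp, map_smul_eq_mul,
    apply_zero_mk p h01] at h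
  norm_num at h
  linarith

theorem apply_le_abs_add_abs (h10 : p (1, 0) = 1) (h01 : p (0, 1) = 1) (a b : ℝ) :
    p (a, b) ≤ |a| + |b| := by
  have h := map_add_le_add p (a, 0) (0, b)
  rwa [Prod.mk_add_mk, add_zero, zero_add, apply_mk_zero p h10, apply_zero_mk p h01] at h

theorem one_half_le_apply_cos_sin (hfst : ∀ a b, |a| ≤ p (a, b)) (hsnd : ∀ a b, |b| ≤ p (a, b))
    (τ : ℝ) : 1 / 2 ≤ p (cos τ, sin τ) := by
  nlinarith [hfst (cos τ) (sin τ), hsnd (cos τ) (sin τ), sin_sq_add_cos_sq τ,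
    sq_abs (cos τ), sq_abs (sin τ), abs_nonneg (cos τ), abs_nonneg (sin τ)]

theorem apply_cos_sin_sub_le (h10 : p (1, 0) = 1) (h01 : p (0, 1) = 1) (τ₁ τ₂ : ℝ) :
    p ((cos τ₂, sin τ₂) - (cos τ₁, sin τ₁)) ≤ 2 * |τ₂ - τ₁| := by
  rw [Prod.mk_sub_mk, two_mul]
  exact (apply_le_abs_add_abs p h10 h01 _ _).trans
    (add_le_add (abs_cos_sub_cos_le _ _) (abs_sin_sub_sin_le _ _))

theorem apply_unitArc_sub_le (h10 : p (1, 0) = 1) (h01 : p (0, 1) = 1)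
    (hfst : ∀ a b, |a| ≤ p (a, b)) (hsnd : ∀ a b, |b| ≤ p (a, b)) (τ₁ τ₂ : ℝ) :
    p (unitArc p τ₂ - unitArc p τ₁) ≤ 8 * |τ₂ - τ₁| := by
  have hn₁ := one_half_le_apply_cos_sin p hfst hsnd τ₁
  have hn₂ := one_half_le_apply_cos_sin p hfst hsnd τ₂
  rw [unitArc_eq_inv_smul, unitArc_eq_inv_smul]
  calc _ ≤ 2 * p ((cos τ₂, sin τ₂) - (cos τ₁, sin τ₁)) / p (cos τ₂, sin τ₂) :=
        map_inv_smul_sub_inv_smul_le p (by linarith) (by linarith)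
    _ ≤ 2 * (2 * |τ₂ - τ₁|) / (1 / 2) := by
        gcongr
        exact apply_cos_sin_sub_le p h10 h01 τ₁ τ₂
    _ = 8 * |τ₂ - τ₁| := by ring

end Plane

end Seminorm

/-- Its supremum is the constant `c_Z` of the paper. -/
def unitArcSlopes (N : ℝ × ℝ → ℝ) : Set ℝ :=
  {q | ∃ τ₁ τ₂ : ℝ, 0 ≤ τ₁ ∧ τ₁ < τ₂ ∧ τ₂ ≤ π / 2 ∧
    q = N (unitArc N τ₂ - unitArc N τ₁) / (τ₂ - τ₁)}

theorem bddAbove_unitArcSlopes {N : ℝ × ℝ → ℝ} {L : ℝ}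
    (hL : ∀ τ₁ τ₂, N (unitArc N τ₂ - unitArc N τ₁) ≤ L * |τ₂ - τ₁|) :
    BddAbove (unitArcSlopes N) := by
  refine ⟨L, ?_⟩
  rintro q ⟨τ₁, τ₂, -, hlt, -, rfl⟩
  rw [div_le_iff₀ (sub_pos.2 hlt), ← abs_of_pos (sub_pos.2 hlt)]
  exact hL τ₁ τ₂

theorem apply_unitArc_sub_le_sSup_mul {N : ℝ × ℝ → ℝ} (hbdd : BddAbove (unitArcSlopes N))
    (hN0 : N 0 = 0) {τ₁ τ₂ : ℝ} (h₀ : 0 ≤ τ₁) (h₁₂ : τ₁ ≤ τ₂) (h₂ : τ₂ ≤ π / 2) :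
    N (unitArc N τ₂ - unitArc N τ₁) ≤ sSup (unitArcSlopes N) * (τ₂ - τ₁) := by
  rcases h₁₂.eq_or_lt with rfl | hlt
  · simp [hN0]
  · rw [← div_le_iff₀ (sub_pos.2 hlt)]
    exact le_csSup hbdd ⟨τ₁, τ₂, h₀, hlt, h₂, rfl⟩

theorem sSup_unitArcSlopes_pos {N : ℝ × ℝ → ℝ} (hbdd : BddAbove (unitArcSlopes N))
    (h10 : N (1, 0) = 1) (h01 : N (0, 1) = 1) (hN : 0 < N (-1, 1)) :
    0 < sSup (unitArcSlopes N) := by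
  refine lt_csSup_of_lt hbdd ⟨0, π / 2, le_rfl, pi_div_two_pos, le_rfl, rfl⟩ ?_
  rw [unitArc_zero h10, unitArc_pi_div_two h01, sub_zero, Prod.mk_sub_mk]
  norm_num
  positivity

theorem log_clamp_sub_log_clamp_le {r R t₁ t₂ : ℝ} (hr : 0 < r) (hrR : r ≤ R) (ht₁ : 0 < t₁)
    (ht : t₁ ≤ t₂) :
    log (min R (max r t₂)) - log (min R (max r t₁)) ≤ log t₂ - log t₁ := by
  have hmono : min R (max r t₁) ≤ min R (max r t₂) := by gcongr
  rcases hmono.eq_or_lt with heq | hlt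
  · rw [heq, sub_self, sub_nonneg]
    exact log_le_log ht₁ ht
  have hlow : t₁ ≤ min R (max r t₁) := by
    refine le_min ?_ (le_max_right r t₁)
    by_contra! h
    have h₁ : min R (max r t₁) = R := min_eq_left (h.le.trans (le_max_right r t₁))
    have h₂ : min R (max r t₂) = R := min_eq_left ((h.trans_le ht).le.trans (le_max_right r t₂))
    exact hlt.ne (h₁.trans h₂.symm)
  have hup : min R (max r t₂) ≤ t₂ := by
    refine (min_le_right _ _).trans (max_le ?_ le_rfl)
    by_contra! h
    have h₁ : min R (max r t₁) = r := by rw [max_eq_left (ht.trans h.le), min_eq_right hrR]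
    have h₂ : min R (max r t₂) = r := by rw [max_eq_left h.le, min_eq_right hrR]
    exact hlt.ne (h₁.trans h₂.symm)
  have := log_le_log (lt_min (hr.trans_le hrR) (lt_max_of_lt_left hr)) hup
  have := log_le_log ht₁ hlow
  linarith

theorem log_sub_log_le_sub_div {s t : ℝ} (hs : 0 < s) (ht : 0 < t) :
    log t - log s ≤ (t - s) / s := by
  rw [← log_div ht.ne' hs.ne', sub_div, div_self hs.ne']
  exact log_le_sub_one_of_pos (div_pos ht hs)

theorem apply_log_spiral_sub_le {V : Type*} [AddGroup V] (N : V → ℝ) (u : ℝ → V)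
    {c ε θ r R t₁ t₂ : ℝ}
    (hu : ∀ τ₁ τ₂, 0 ≤ τ₁ → τ₁ ≤ τ₂ → τ₂ ≤ θ → N (u τ₂ - u τ₁) ≤ c * (τ₂ - τ₁))
    (hc : 0 < c) (hε : 0 < ε) (hr : 0 < r) (hrR : r ≤ R) (hR : ε / c * log (R / r) = θ)
    (ht₁ : 0 < t₁) (ht : t₁ ≤ t₂) :
    N (u (ε / c * log (min R (max r t₂) / r)) - u (ε / c * log (min R (max r t₁) / r))) ≤
      ε * (t₂ - t₁) / t₁ := by
  set a := min R (max r t₁)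
  set b := min R (max r t₂)
  have ha : r ≤ a := le_min hrR (le_max_left r t₁)
  have hab : a ≤ b := min_le_min_left R (max_le_max_left r ht)
  have hb : b ≤ R := min_le_left _ _
  have hτ : ∀ {s t}, r ≤ s → s ≤ t → ε / c * log (s / r) ≤ ε / c * log (t / r) := fun hs hst ↦
    by gcongr; exact div_pos (hr.trans_le hs) hr
  calc _ ≤ c * (ε / c * log (b / r) - ε / c * log (a / r)) := by
        refine hu _ _ ?_ (hτ ha hab) (hR ▸ hτ (ha.trans hab) hb)
        simpa using hτ le_rfl ha
    _ = ε * (log b - log a) := by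
        rw [log_div (hr.trans_le (ha.trans hab)).ne' hr.ne', log_div (hr.trans_le ha).ne' hr.ne']
        field_simp
        ring
    _ ≤ ε * (log t₂ - log t₁) :=
        mul_le_mul_of_nonneg_left (log_clamp_sub_log_clamp_le hr hrR ht₁ ht) hε.le
    _ ≤ ε * ((t₂ - t₁) / t₁) :=
        mul_le_mul_of_nonneg_left (log_sub_log_le_sub_div ht₁ (ht₁.trans_le ht)) hε.le
    _ = ε * (t₂ - t₁) / t₁ := (mul_div_assoc _ _ _).symm

theorem stmt_11_general
    {Y : Type*} [NormedAddCommGroup Y]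
    (nZ : ℝ × ℝ → ℝ)
    (hN_add : ∀ p q, nZ (p + q) ≤ nZ p + nZ q)
    (hN_smul : ∀ (t : ℝ) p, nZ (t • p) = |t| * nZ p)
    (h10 : nZ (1, 0) = 1) (h01 : nZ (0, 1) = 1)
    (huncond : ∀ a b : ℝ, nZ (-a, b) = nZ (a, b) ∧ nZ (a, -b) = nZ (a, b))
    (cZ : ℝ)
    (hcZ : cZ = sSup {q | ∃ τ₁ τ₂ : ℝ, 0 ≤ τ₁ ∧ τ₁ < τ₂ ∧ τ₂ ≤ π / 2 ∧
      q = nZ ((Real.cos τ₂ / nZ (Real.cos τ₂, Real.sin τ₂),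
               Real.sin τ₂ / nZ (Real.cos τ₂, Real.sin τ₂)) -
              (Real.cos τ₁ / nZ (Real.cos τ₁, Real.sin τ₁),
               Real.sin τ₁ / nZ (Real.cos τ₁, Real.sin τ₁))) / (τ₂ - τ₁)})
    (ε r R : ℝ) (hε0 : 0 < ε) (hr : 0 < r) (hrR : r < R)
    (hR : ε / cZ * Real.log (R / r) = π / 2) :
    let τf : ℝ → ℝ := fun t => ε / cZ * Real.log (t / r)
    let cf : ℝ → ℝ := fun t =>
      if t ≤ r then 1 else if R ≤ t then 0 else
        Real.cos (τf t) / nZ (Real.cos (τf t), Real.sin (τf t))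
    let sf : ℝ → ℝ := fun t =>
      if t ≤ r then 0 else if R ≤ t then 1 else
        Real.sin (τf t) / nZ (Real.cos (τf t), Real.sin (τf t))
    let U : Y → ℝ × ℝ := fun x => (cf ‖x‖, sf ‖x‖)
    ∀ x y : Y, y ≠ 0 → ‖y‖ ≤ ‖x‖ →
      nZ (U x - U y) ≤ ε * (‖x‖ - ‖y‖) / ‖y‖ ∧
      ‖y‖ * nZ (U x - U y) ≤ ε * ‖x - y‖ := by
  intro τf cf sf U x y hy hxy
  obtain ⟨p, rfl⟩ : ∃ p : Seminorm ℝ (ℝ × ℝ), ⇑p = nZ :=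
    ⟨Seminorm.of nZ hN_add (by simpa using hN_smul), rfl⟩
  have hfst := p.abs_fst_le h10 fun a b ↦ (huncond a b).2
  have hbdd : BddAbove (unitArcSlopes p) :=
    bddAbove_unitArcSlopes (p.apply_unitArc_sub_le h10 h01 hfst
      (p.abs_snd_le h01 fun a b ↦ (huncond a b).1))
  replace hcZ : cZ = sSup (unitArcSlopes p) := hcZ
  have hcZ_pos : 0 < cZ := hcZ ▸ sSup_unitArcSlopes_pos hbdd h10 h01
    (one_pos.trans_le (by simpa using hfst (-1) 1))
  have hU : ∀ z : Y, U z = unitArc p (τf (min R (max r ‖z‖))) := by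
    intro z
    simp only [U, cf, sf]
    split_ifs with h₁ h₂
    · rw [max_eq_left h₁, min_eq_right hrR.le]
      simp [τf, hr.ne', unitArc_zero h10]
    · rw [max_eq_right (not_le.1 h₁).le, min_eq_left h₂, show τf R = π / 2 from hR,
        unitArc_pi_div_two h01]
    · rw [max_eq_right (not_le.1 h₁).le, min_eq_right (not_le.1 h₂).le]
      rfl
  have hUxy : p (U x - U y) ≤ ε * (‖x‖ - ‖y‖) / ‖y‖ := by
    rw [hU, hU]
    exact apply_log_spiral_sub_le p (unitArc p)
      (fun _ _ h₀ h₁₂ h₂ ↦ hcZ ▸ apply_unitArc_sub_le_sSup_mul hbdd (map_zero p) h₀ h₁₂ h₂)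
      hcZ_pos hε0 hr hrR.le hR (norm_pos_iff.2 hy) hxy
  refine ⟨hUxy, ?_⟩
  calc ‖y‖ * p (U x - U y) ≤ ‖y‖ * (ε * (‖x‖ - ‖y‖) / ‖y‖) := by gcongr
    _ = ε * (‖x‖ - ‖y‖) := mul_div_cancel₀ _ (norm_ne_zero_iff.2 hy)
    _ ≤ ε * ‖x - y‖ := mul_le_mul_of_nonneg_left (norm_sub_norm_le x y) hε0.le

/-- The estimates \eqref{E:str} and \eqref{E:bound_norm} for the angular part
U(x) = (c(x), s(x)) of the logarithmic-spiral bending map. -/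
theorem stmt_11
    {Y : Type*} [NormedAddCommGroup Y] [NormedSpace ℝ Y]
    (nZ : ℝ × ℝ → ℝ)
    (hN_add : ∀ p q, nZ (p + q) ≤ nZ p + nZ q)
    (hN_smul : ∀ (t : ℝ) p, nZ (t • p) = |t| * nZ p)
    (hN_def : ∀ p, nZ p = 0 → p = 0)
    (h10 : nZ (1, 0) = 1) (h01 : nZ (0, 1) = 1)
    (huncond : ∀ a b : ℝ, nZ (-a, b) = nZ (a, b) ∧ nZ (a, -b) = nZ (a, b))
    (cZ : ℝ)
    (hcZ : cZ = sSup {q | ∃ τ₁ τ₂ : ℝ, 0 ≤ τ₁ ∧ τ₁ < τ₂ ∧ τ₂ ≤ π / 2 ∧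
      q = nZ ((Real.cos τ₂ / nZ (Real.cos τ₂, Real.sin τ₂),
               Real.sin τ₂ / nZ (Real.cos τ₂, Real.sin τ₂)) -
              (Real.cos τ₁ / nZ (Real.cos τ₁, Real.sin τ₁),
               Real.sin τ₁ / nZ (Real.cos τ₁, Real.sin τ₁))) / (τ₂ - τ₁)})
    (ε r R : ℝ) (hε0 : 0 < ε) (hε1 : ε < 1) (hr : 0 < r) (hrR : r < R)
    (hR : ε / cZ * Real.log (R / r) = π / 2) :
    let τf : ℝ → ℝ := fun t => ε / cZ * Real.log (t / r)
    let cf : ℝ → ℝ := fun t =>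
      if t ≤ r then 1 else if R ≤ t then 0 else
        Real.cos (τf t) / nZ (Real.cos (τf t), Real.sin (τf t))
    let sf : ℝ → ℝ := fun t =>
      if t ≤ r then 0 else if R ≤ t then 1 else
        Real.sin (τf t) / nZ (Real.cos (τf t), Real.sin (τf t))
    let U : Y → ℝ × ℝ := fun x => (cf ‖x‖, sf ‖x‖)
    ∀ x y : Y, y ≠ 0 → ‖y‖ ≤ ‖x‖ →
      nZ (U x - U y) ≤ ε * (‖x‖ - ‖y‖) / ‖y‖ ∧
      ‖y‖ * nZ (U x - U y) ≤ ε * ‖x - y‖ :=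
  stmt_11_general nZ hN_add hN_smul h10 h01 huncond cZ hcZ ε r R hε0 hr hrR hR
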